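/- Let m < M be real numbers, let C be a bounded self-adjoint operator on a complex Hilbert space H whose spectrum is contained in [m, M], and let f : [m, M] → ℝ be a continuous P-class function with f(t) > 0 for all t ∈ [m, M]. Then for every x ∈ H with ‖x‖ = 1, one has 2⟨f(C)x, x⟩ ≤ λ · f(⟨Cx, x⟩), where λ = 2(f(m) + f(M)) / (min over t ∈ [m, M] of f(t)). -/

import Mathlib

/-!
Writing `t ∈ [m, M]` as a convex combination of the endpoints, the P-class inequality bounds
`f t ≤ f m + f M` on all of `[m, M]`. By spectral mapping the spectrum of `f(C)` then lies below
`f m + f M`, hence so does `⟨f(C)x, x⟩`; on the other side `⟨Cx, x⟩ ∈ [m, M]`, so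
`f ⟨Cx, x⟩` is at least the minimum of `f`, which is positive.
-/

open scoped InnerProductSpace

def PClassOn (s : Set ℝ) (f : ℝ → ℝ) : Prop :=
  ∀ x ∈ s, ∀ y ∈ s, ∀ l ∈ Set.Icc (0 : ℝ) 1, f (l * x + (1 - l) * y) ≤ f x + f y

lemma PClassOn.le_add_of_mem_Icc {f : ℝ → ℝ} {a b t : ℝ} (hf : PClassOn (Set.Icc a b) f)
    (ht : t ∈ Set.Icc a b) : f t ≤ f a + f b := by
  have hab : a ≤ b := ht.1.trans ht.2
  rw [← segment_eq_Icc hab] at ht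
  obtain ⟨l, l', hl, hl', hsum, rfl⟩ := ht
  obtain rfl : l' = 1 - l := by linarith
  exact hf a (Set.left_mem_Icc.mpr hab) b (Set.right_mem_Icc.mpr hab) l ⟨hl, by linarith⟩

namespace ContinuousLinearMap

variable {𝕜 H : Type*} [RCLike 𝕜] [NormedAddCommGroup H] [InnerProductSpace 𝕜 H]

lemma re_inner_apply_self_mono {A B : H →L[𝕜] H} (h : A ≤ B) (x : H) :
    RCLike.re ⟪A x, x⟫_𝕜 ≤ RCLike.re ⟪B x, x⟫_𝕜 := by
  have := ((le_def A B).mp h).re_inner_nonneg_left x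
  simpa only [sub_apply, inner_sub_left, map_sub, sub_nonneg] using this

end ContinuousLinearMap

lemma ContinuousLinearMap.re_inner_algebraMap_apply_self {H : Type*} [NormedAddCommGroup H]
    [InnerProductSpace ℂ H] (c : ℝ) (x : H) :
    (⟪algebraMap ℝ (H →L[ℂ] H) c x, x⟫_ℂ).re = c * ‖x‖ ^ 2 := by
  rw [Algebra.algebraMap_eq_smul_one, ← algebraMap_smul ℂ c (1 : H →L[ℂ] H), smul_apply,
    one_apply_eq_self, inner_smul_left]
  simp [inner_self_eq_norm_sq_to_K, ← Complex.ofReal_pow]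

section SpectralBounds

open ContinuousLinearMap

variable {H : Type*} [NormedAddCommGroup H] [InnerProductSpace ℂ H] [CompleteSpace H]
  {A : H →L[ℂ] H} {c : ℝ}

lemma IsSelfAdjoint.re_inner_le_of_spectrum_le (hA : IsSelfAdjoint A)
    (h : ∀ r ∈ spectrum ℝ A, r ≤ c) (x : H) : (⟪A x, x⟫_ℂ).re ≤ c * ‖x‖ ^ 2 :=
  re_inner_algebraMap_apply_self c x ▸
    re_inner_apply_self_mono (le_algebraMap_of_spectrum_le h hA) x

lemma IsSelfAdjoint.le_re_inner_of_le_spectrum (hA : IsSelfAdjoint A)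
    (h : ∀ r ∈ spectrum ℝ A, c ≤ r) (x : H) : c * ‖x‖ ^ 2 ≤ (⟪A x, x⟫_ℂ).re :=
  re_inner_algebraMap_apply_self c x ▸
    re_inner_apply_self_mono (algebraMap_le_of_le_spectrum h hA) x

end SpectralBounds

/-- Corollary 2.10(i): for `C` self-adjoint with spectrum in `[m, M]` and `f` a continuous
positive P-class function on `[m, M]`, every unit vector `x` satisfies
`2⟨f(C)x, x⟩ ≤ λ f(⟨Cx, x⟩)` where `λ = 2(f(m) + f(M)) / min_{t ∈ [m, M]} f(t)`. -/
theorem P_class_ratio_bound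
    {H : Type*} [NormedAddCommGroup H] [InnerProductSpace ℂ H] [CompleteSpace H]
    (m M : ℝ) (hmM : m < M)
    (C : H →L[ℂ] H) (hC : IsSelfAdjoint C)
    (hspec : spectrum ℝ C ⊆ Set.Icc m M)
    (f : ℝ → ℝ) (hf_cont : ContinuousOn f (Set.Icc m M))
    (hf_P : ∀ x ∈ Set.Icc m M, ∀ y ∈ Set.Icc m M, ∀ l ∈ Set.Icc (0 : ℝ) 1,
      f (l * x + (1 - l) * y) ≤ f x + f y)
    (hf_pos : ∀ t ∈ Set.Icc m M, 0 < f t)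
    (x : H) (hx : ‖x‖ = 1) :
    2 * (⟪(cfc f C) x, x⟫_ℂ).re ≤
      (2 * (f m + f M) / sInf (f '' Set.Icc m M)) * f (⟪C x, x⟫_ℂ).re := by
  have hm : m ∈ Set.Icc m M := Set.left_mem_Icc.mpr hmM.le
  have hM : M ∈ Set.Icc m M := Set.right_mem_Icc.mpr hmM.le
  have hCx : (⟪C x, x⟫_ℂ).re ∈ Set.Icc m M := by
    refine ⟨?_, ?_⟩
    · simpa [hx] using hC.le_re_inner_of_le_spectrum (fun r hr ↦ (hspec hr).1) x
    · simpa [hx] using hC.re_inner_le_of_spectrum_le (fun r hr ↦ (hspec hr).2) x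
  have hfCx : (⟪(cfc f C) x, x⟫_ℂ).re ≤ f m + f M := by
    have hspec_f : ∀ r ∈ spectrum ℝ (cfc f C), r ≤ f m + f M := by
      rw [cfc_map_spectrum f C hC (hf_cont.mono hspec)]
      rintro _ ⟨s, hs, rfl⟩
      exact PClassOn.le_add_of_mem_Icc hf_P (hspec hs)
    simpa [hx] using (cfc_predicate f C).re_inner_le_of_spectrum_le hspec_f x
  have hcpt : IsCompact (f '' Set.Icc m M) := isCompact_Icc.image_of_continuousOn hf_cont
  obtain ⟨t₀, ht₀, hmin⟩ := hcpt.sInf_mem ((Set.nonempty_Icc.mpr hmM.le).image f)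
  have hmin_pos : 0 < sInf (f '' Set.Icc m M) := hmin ▸ hf_pos t₀ ht₀
  have hmin_le : sInf (f '' Set.Icc m M) ≤ f (⟪C x, x⟫_ℂ).re :=
    csInf_le hcpt.bddBelow (Set.mem_image_of_mem f hCx)
  have hsum_pos : 0 < f m + f M := add_pos (hf_pos m hm) (hf_pos M hM)
  calc 2 * (⟪(cfc f C) x, x⟫_ℂ).re ≤ 2 * (f m + f M) := by linarith
    _ = (2 * (f m + f M) / sInf (f '' Set.Icc m M)) * sInf (f '' Set.Icc m M) := by
      field_simp
    _ ≤ _ := by gcongr
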